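/- Let C be a Z2Z4-additive code with Gray image C' = Φ(C) and Z2Z4-dual image C'_⊥ = Φ(C⊥). If D_C = {2u*v : u ∈ C, v ∈ C⊥} = {0}, then both C' and C'_⊥ are linear binary codes. -/
import Mathlib


open Finset

/-- The ambient mixed alphabet space `Z2^α × Z4^β`. -/
abbrev Amb (α β : ℕ) := (Fin α → ZMod 2) × (Fin β → ZMod 4)

/-- The binary space `Z2^{α+2β}`, represented as `Z2^α × Z2^β × Z2^β`
(binary part, first Gray bits, second Gray bits). -/
abbrev Bin (α β : ℕ) := (Fin α → ZMod 2) × (Fin β → ZMod 2) × (Fin β → ZMod 2)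

/-- The `Z4`-valued inner product `[u,v] = 2·Σ u_i v_i + Σ u'_j v'_j`. -/
def zinner {α β : ℕ} (u v : Amb α β) : ZMod 4 :=
  2 * ∑ i, ((u.1 i).val : ZMod 4) * ((v.1 i).val : ZMod 4) + ∑ j, u.2 j * v.2 j

/-- The dual of a subset of the mixed ambient space. -/
def zdual {α β : ℕ} (C : Set (Amb α β)) : Set (Amb α β) :=
  {v | ∀ u ∈ C, zinner u v = 0}

/-- The vector `2u*v = (0 | 2u'*v')` (componentwise product; doubling kills the binary part). -/
def star2 {α β : ℕ} (u v : Amb α β) : Amb α β :=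
  (0, fun j => 2 * u.2 j * v.2 j)

/-- The usual Gray map `Z4 → Z2²`. -/
def gray (x : ZMod 4) : ZMod 2 × ZMod 2 :=
  match x.val with
  | 0 => (0, 0)
  | 1 => (0, 1)
  | 2 => (1, 1)
  | _ => (1, 0)

/-- The extended Gray map `Φ : Z2^α × Z4^β → Z2^{α+2β}`. -/
def Phi {α β : ℕ} (u : Amb α β) : Bin α β :=
  (u.1, fun j => (gray (u.2 j)).1, fun j => (gray (u.2 j)).2)

/-- The standard binary inner product on `Z2^{α+2β}`. -/
def binner {α β : ℕ} (x y : Bin α β) : ZMod 2 :=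
  ∑ i, x.1 i * y.1 i + ∑ j, x.2.1 j * y.2.1 j + ∑ j, x.2.2 j * y.2.2 j

/-- The dual of a subset of `Z2^{α+2β}`. -/
def bdual {α β : ℕ} (S : Set (Bin α β)) : Set (Bin α β) :=
  {y | ∀ x ∈ S, binner x y = 0}

/-- A subset of `Z2^{α+2β}` is a linear binary code if it is a linear subspace. -/
def IsLinear {α β : ℕ} (S : Set (Bin α β)) : Prop :=
  ∃ M : Submodule (ZMod 2) (Bin α β), ↑M = S

/-- The set `D_C = {2u*v : u ∈ C, v ∈ C⊥}`. -/
def DC {α β : ℕ} (C : Set (Amb α β)) : Set (Amb α β) :=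
  {x | ∃ u ∈ C, ∃ v ∈ zdual C, x = star2 u v}

/-- The standard binary inner product on `Z2^n`. -/
def binner2 {n : ℕ} (u v : Fin n → ZMod 2) : ZMod 2 := ∑ i, u i * v i

/-- The dual of a subset of `Z2^n`. -/
def bdual2 {n : ℕ} (C : Set (Fin n → ZMod 2)) : Set (Fin n → ZMod 2) :=
  {v | ∀ u ∈ C, binner2 u v = 0}

section Aux

variable {α β : ℕ}

lemma gray_add (a b : ZMod 4) :
    gray (a + b + 2*a*b) = ((gray a).1 + (gray b).1, (gray a).2 + (gray b).2) := by revert a b; decide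

lemma Phi_zero : Phi (0 : Amb α β) = 0 := by
  refine Prod.ext rfl (Prod.ext ?_ ?_) <;> funext j <;>
    show _ = (0 : ZMod 2) <;> simp [Phi] <;> decide

lemma Phi_add (u v : Amb α β) : Phi u + Phi v = Phi (u + v + star2 u v) := by
  have h2 : ∀ j, (u + v + star2 u v).2 j = u.2 j + v.2 j + 2 * u.2 j * v.2 j := fun _ => rfl
  refine Prod.ext ?_ (Prod.ext ?_ ?_)
  · show u.1 + v.1 = u.1 + v.1 + 0
    rw [add_zero]
  · funext j
    show (gray (u.2 j)).1 + (gray (v.2 j)).1 = (gray ((u + v + star2 u v).2 j)).1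
    rw [h2, gray_add]
  · funext j
    show (gray (u.2 j)).2 + (gray (v.2 j)).2 = (gray ((u + v + star2 u v).2 j)).2
    rw [h2, gray_add]

lemma zinner_zero_right (u : Amb α β) : zinner u 0 = 0 := by
  simp [zinner]

lemma zinner_comm (u v : Amb α β) : zinner u v = zinner v u := by
  unfold zinner
  congr 1
  · congr 1
    exact Finset.sum_congr rfl fun i _ => mul_comm _ _
  · exact Finset.sum_congr rfl fun j _ => mul_comm _ _

lemma zinner_add_right (u a b : Amb α β) :
    zinner u (a + b) = zinner u a + zinner u b := by
  have key : ∀ x y z : ZMod 2, 2 * ((x.val : ZMod 4) * (((y+z)).val : ZMod 4))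
      = 2 * ((x.val : ZMod 4) * (y.val : ZMod 4)) + 2 * ((x.val : ZMod 4) * (z.val : ZMod 4)) := by
    decide
  show 2 * ∑ i, ((u.1 i).val : ZMod 4) * (((a.1 i + b.1 i)).val : ZMod 4)
      + ∑ j, u.2 j * (a.2 j + b.2 j) = _
  unfold zinner
  rw [Finset.mul_sum, Finset.mul_sum, Finset.mul_sum]
  simp_rw [key, mul_add, Finset.sum_add_distrib]
  ring

lemma zinner_star2_eq_zero (a b c : Amb α β)
    (hz : ∀ j, 2 * a.2 j * b.2 j = 0) : zinner a (star2 b c) = 0 := by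
  show 2 * ∑ i, ((a.1 i).val : ZMod 4) * (((0 : Fin α → ZMod 2) i).val : ZMod 4)
      + ∑ j, a.2 j * (2 * b.2 j * c.2 j) = 0
  rw [Finset.sum_eq_zero (fun i _ => by simp), Finset.sum_eq_zero, mul_zero, add_zero]
  intro j _
  calc a.2 j * (2 * b.2 j * c.2 j) = (2 * a.2 j * b.2 j) * c.2 j := by ring
  _ = 0 := by rw [hz j, zero_mul]

instance z42 : Module (ZMod 4) (ZMod 2) :=
  Module.compHom (ZMod 2) (ZMod.castHom (show (2:ℕ) ∣ 4 by norm_num) (ZMod 2))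

lemma baer_zmod4 : Module.Baer (ZMod 4) (ZMod 4) := by
  intro I g
  have all4 : ∀ z : ZMod 4, z = 0 ∨ z = 1 ∨ z = 2 ∨ z = 3 := by decide
  by_cases h1 : (1 : ZMod 4) ∈ I
  · refine ⟨LinearMap.toSpanSingleton (ZMod 4) (ZMod 4) (g ⟨1, h1⟩), fun x mem => ?_⟩
    rw [LinearMap.toSpanSingleton_apply, ← map_smul]
    congr 1
    exact Subtype.ext (by simp)
  · have h3 : (3 : ZMod 4) ∉ I := by
      intro h3
      apply h1
      have := I.smul_mem (3 : ZMod 4) h3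
      rwa [smul_eq_mul, show (3:ZMod 4)*3 = 1 from by decide] at this
    by_cases h2 : (2 : ZMod 4) ∈ I
    · have hmem : ∀ x ∈ I, x = 0 ∨ x = 2 := by
        intro x hx
        rcases all4 x with rfl|rfl|rfl|rfl
        · exact Or.inl rfl
        · exact absurd hx h1
        · exact Or.inr rfl
        · exact absurd hx h3
      have hy : 2 * g ⟨2, h2⟩ = 0 := by
        have hsm : (2 : ZMod 4) • (⟨2, h2⟩ : I) = 0 := by
          apply Subtype.ext
          show (2 : ZMod 4) • (2 : ZMod 4) = 0
          decide
        calc 2 * g ⟨2, h2⟩ = g ((2 : ZMod 4) • ⟨2, h2⟩) := by rw [map_smul, smul_eq_mul]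
        _ = 0 := by rw [hsm, map_zero]
      have hy02 : g ⟨2, h2⟩ = 0 ∨ g ⟨2, h2⟩ = 2 := by
        revert hy; generalize g ⟨2, h2⟩ = y; revert y; decide
      rcases hy02 with hy0 | hy2
      · refine ⟨0, fun x mem => ?_⟩
        rcases hmem x mem with rfl | rfl
        · show (0 : ZMod 4) = g ⟨0, mem⟩
          rw [show (⟨0, mem⟩ : I) = 0 from Subtype.ext rfl, map_zero]
        · show (0 : ZMod 4) = g ⟨2, mem⟩
          exact hy0.symm
      · refine ⟨LinearMap.id, fun x mem => ?_⟩
        rcases hmem x mem with rfl | rfl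
        · show (0 : ZMod 4) = g ⟨0, mem⟩
          rw [show (⟨0, mem⟩ : I) = 0 from Subtype.ext rfl, map_zero]
        · show (2 : ZMod 4) = g ⟨2, mem⟩
          exact hy2.symm
    · refine ⟨0, fun x mem => ?_⟩
      have hx0 : x = 0 := by
        rcases all4 x with rfl|rfl|rfl|rfl
        · rfl
        · exact absurd mem h1
        · exact absurd mem h2
        · exact absurd mem h3
      subst hx0
      show (0 : ZMod 4) = g ⟨0, mem⟩
      rw [show (⟨0, mem⟩ : I) = 0 from Subtype.ext rfl, map_zero]

end Aux

lemma hz_of_h {α β : ℕ} (C : AddSubgroup (Amb α β))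
    (h : DC (C : Set (Amb α β)) = {0}) :
    ∀ u ∈ C, ∀ v ∈ zdual (C : Set (Amb α β)), ∀ j, 2 * u.2 j * v.2 j = 0 := by
  intro u hu v hv j
  have hm : star2 u v ∈ DC (C : Set (Amb α β)) := ⟨u, hu, v, hv, rfl⟩
  rw [h] at hm
  have h0 : star2 u v = 0 := hm
  have := congrFun (congrArg Prod.snd h0) j
  simpa [star2] using this

lemma star2_mem {α β : ℕ} (C : AddSubgroup (Amb α β))
    (h : DC (C : Set (Amb α β)) = {0}) :
    ∀ u ∈ C, ∀ w ∈ C, star2 u w ∈ C := by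
  intro u hu w hw
  by_contra hx
  set x := star2 u w with hxdef
  let C' : Submodule (ZMod 4) (Amb α β) :=
    { carrier := C
      add_mem' := fun ha hb => C.add_mem ha hb
      zero_mem' := C.zero_mem
      smul_mem' := by
        intro c a ha
        have h1 : ((c.val : ℕ) : ZMod 4) = c := ZMod.natCast_rightInverse c
        rw [← h1, Nat.cast_smul_eq_nsmul]
        exact AddSubgroup.nsmul_mem C ha c.val }
  let Qt := Amb α β ⧸ C'
  let xb : Qt := Submodule.Quotient.mk x
  have hxb : xb ≠ 0 := by
    intro h0
    exact hx ((Submodule.Quotient.mk_eq_zero C').mp h0)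
  let ℓ : ZMod 4 →ₗ[ZMod 4] Qt := LinearMap.toSpanSingleton (ZMod 4) Qt xb
  let g : ZMod 4 →ₗ[ZMod 4] ZMod 4 := (2 : ZMod 4) • LinearMap.id
  have hgapp : ∀ z, g z = 2 * z := fun z => rfl
  have hℓapp : ∀ z, ℓ z = z • xb := fun z => rfl
  have hker : LinearMap.ker ℓ ≤ LinearMap.ker g := by
    intro z hzk
    have hzℓ : z • xb = 0 := hzk
    have all4 : ∀ z : ZMod 4, z = 0 ∨ z = 1 ∨ z = 2 ∨ z = 3 := by decide
    have hz2 : 2 * z = 0 := by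
      rcases all4 z with rfl|rfl|rfl|rfl
      · rw [mul_zero]
      · exact absurd (by simpa using hzℓ) hxb
      · decide
      · exfalso
        apply hxb
        have h9 : (3:ZMod 4) • ((3:ZMod 4) • xb) = 0 := by rw [hzℓ, smul_zero]
        rwa [smul_smul, show (3:ZMod 4)*3 = 1 from by decide, one_smul] at h9
    show z ∈ LinearMap.ker g
    rw [LinearMap.mem_ker, hgapp, hz2]
  let ℓb := Submodule.liftQ (LinearMap.ker ℓ) ℓ le_rfl
  have hinj : Function.Injective ℓb := by
    rw [← LinearMap.ker_eq_bot]
    exact Submodule.ker_liftQ_eq_bot _ _ _ le_rfl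
  let gb := Submodule.liftQ (LinearMap.ker ℓ) g hker
  obtain ⟨H, hH⟩ := baer_zmod4.extension_property ℓb hinj gb
  let F : Amb α β →ₗ[ZMod 4] ZMod 4 := H ∘ₗ C'.mkQ
  have hFC : ∀ a ∈ C, F a = 0 := by
    intro a ha
    have h0 : C'.mkQ a = 0 := (Submodule.Quotient.mk_eq_zero C').mpr ha
    show H (C'.mkQ a) = 0
    rw [h0, map_zero]
  have hFx : F x = 2 := by
    have h1 : C'.mkQ x = ℓb (Submodule.Quotient.mk (1 : ZMod 4)) := by
      rw [Submodule.liftQ_apply]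
      show xb = ℓ 1
      rw [hℓapp, one_smul]
    show H (C'.mkQ x) = 2
    rw [h1]
    have h3 : H (ℓb (Submodule.Quotient.mk (1 : ZMod 4)))
        = gb (Submodule.Quotient.mk (1 : ZMod 4)) := DFunLike.congr_fun hH _
    rw [h3, Submodule.liftQ_apply, hgapp, mul_one]
  let e1 : Fin α → Amb α β := fun i => (Pi.single i 1, 0)
  let e2 : Fin β → Amb α β := fun j => (0, Pi.single j 1)
  let v : Amb α β := (fun i => if F (e1 i) = 2 then 1 else 0, fun j => F (e2 j))
  have hdecomp : ∀ a : Amb α β,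
      a = ∑ i, (((a.1 i).val : ℕ) : ZMod 4) • e1 i + ∑ j, a.2 j • e2 j := by
    intro a
    refine Prod.ext ?_ ?_
    · rw [Prod.fst_add, Prod.fst_sum, Prod.fst_sum]
      have hA : ∀ i, ((((a.1 i).val : ℕ) : ZMod 4) • e1 i).1 = Pi.single i (a.1 i) := by
        intro i
        show (((a.1 i).val : ℕ) : ZMod 4) • (Pi.single i 1 : Fin α → ZMod 2) = _
        rw [Nat.cast_smul_eq_nsmul, ← Pi.single_smul, nsmul_eq_mul, mul_one,
          ZMod.natCast_rightInverse (a.1 i)]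
      have hB : ∀ j, ((a.2 j • e2 j).1 : Fin α → ZMod 2) = 0 := fun j => smul_zero _
      rw [Finset.sum_congr rfl (fun i _ => hA i), Finset.sum_congr rfl (fun j _ => hB j),
        Finset.sum_const_zero, add_zero, Finset.univ_sum_single]
    · rw [Prod.snd_add, Prod.snd_sum, Prod.snd_sum]
      have hA : ∀ i, ((((a.1 i).val : ℕ) : ZMod 4) • e1 i).2 = (0 : Fin β → ZMod 4) :=
        fun i => smul_zero _
      have hB : ∀ j, (a.2 j • e2 j).2 = Pi.single j (a.2 j) := by
        intro j
        show a.2 j • (Pi.single j 1 : Fin β → ZMod 4) = _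
        rw [← Pi.single_smul, smul_eq_mul, mul_one]
      rw [Finset.sum_congr rfl (fun i _ => hA i), Finset.sum_congr rfl (fun j _ => hB j),
        Finset.sum_const_zero, zero_add, Finset.univ_sum_single]
  have hFe1 : ∀ i, 2 * F (e1 i) = 0 := by
    intro i
    have h20 : (2 : ZMod 4) • e1 i = 0 := by
      refine Prod.ext ?_ ?_
      · funext k
        show (2 : ZMod 4) • ((Pi.single i 1 : Fin α → ZMod 2) k) = 0
        rw [show ((2:ZMod 4)) = ((2:ℕ):ZMod 4) from by norm_num,
          Nat.cast_smul_eq_nsmul, two_smul]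
        exact CharTwo.add_self_eq_zero _
      · exact smul_zero _
    calc 2 * F (e1 i) = F ((2 : ZMod 4) • e1 i) := by rw [map_smul, smul_eq_mul]
    _ = 0 := by rw [h20, map_zero]
  have hFv : ∀ a : Amb α β, F a = zinner a v := by
    intro a
    conv_lhs => rw [hdecomp a]
    rw [map_add, map_sum, map_sum]
    simp_rw [map_smul, smul_eq_mul]
    have hterm : ∀ i, (((a.1 i).val : ℕ) : ZMod 4) * F (e1 i)
        = 2 * ((((a.1 i).val : ℕ) : ZMod 4) * ((v.1 i).val : ZMod 4)) := by
      intro i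
      have h02 : F (e1 i) = 0 ∨ F (e1 i) = 2 := by
        have h2f := hFe1 i
        revert h2f
        generalize F (e1 i) = y
        revert y; decide
      have hv1 : v.1 i = if F (e1 i) = 2 then 1 else 0 := rfl
      rcases h02 with h0 | h2
      · rw [hv1, h0, if_neg (show ¬((0:ZMod 4) = 2) from by decide)]
        simp
      · rw [hv1, h2, if_pos rfl]
        simp [ZMod.val_one]
        ring
    rw [Finset.sum_congr rfl (fun i _ => hterm i), ← Finset.mul_sum]
    rfl
  have hvdual : v ∈ zdual (C : Set (Amb α β)) := by
    intro a ha
    rw [← hFv a]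
    exact hFC a ha
  have hzx : zinner x v = 0 := by
    rw [zinner_comm, hxdef]
    apply zinner_star2_eq_zero
    intro j
    calc 2 * v.2 j * u.2 j = 2 * u.2 j * v.2 j := by ring
    _ = 0 := hz_of_h C h u hu v hvdual j
  rw [← hFv x, hFx] at hzx
  exact absurd hzx (by decide)

/-- If `D_C = {0}`, then `Φ(C)` and `Φ(C⊥)` are linear binary codes. -/
theorem stmt9 {α β : ℕ} (C : AddSubgroup (Amb α β))
    (h : DC (C : Set (Amb α β)) = {0}) :
    IsLinear (Phi '' (C : Set (Amb α β))) ∧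
    IsLinear (Phi '' zdual (C : Set (Amb α β))) := by
  have hc2 : ∀ d : ZMod 2, d = 0 ∨ d = 1 := by decide
  have mk : ∀ S : Set (Amb α β), (0 : Amb α β) ∈ S →
      (∀ v ∈ S, ∀ w ∈ S, v + w + star2 v w ∈ S) → IsLinear (Phi '' S) := by
    intro S h0 hadd
    refine ⟨{ carrier := Phi '' S
              zero_mem' := ⟨0, h0, Phi_zero⟩
              add_mem' := ?_
              smul_mem' := ?_ }, rfl⟩
    · rintro a b ⟨p, hp, rfl⟩ ⟨q, hq, rfl⟩
      exact ⟨p + q + star2 p q, hadd p hp q hq, (Phi_add p q).symm⟩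
    · rintro c y ⟨p, hp, rfl⟩
      rcases hc2 c with rfl | rfl
      · rw [zero_smul]
        exact ⟨0, h0, Phi_zero⟩
      · rw [one_smul]
        exact ⟨p, hp, rfl⟩
  constructor
  · refine mk _ C.zero_mem ?_
    intro p hp q hq
    exact C.add_mem (C.add_mem hp hq) (star2_mem C h p hp q hq)
  · refine mk _ (fun u _ => zinner_zero_right u) ?_
    intro p hp q hq a ha
    rw [zinner_add_right, zinner_add_right, hp a ha, hq a ha,
      zinner_star2_eq_zero a p q (fun j => hz_of_h C h a ha p hp j), add_zero, add_zero]
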